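/- arXiv:math/9807018 — 2 statements merged into one kernel-verified Lean document; each statement's English description precedes it below -/
import Mathlib

section
/- The ring ℤ[u,v]/(uv − u² − v², u³, v³, u²v − uv², u²v²) is a free ℤ-module of rank 6, with basis given by the images of 1, u, v, u², v², u²v. -/
open MvPolynomial

structure Q6 where
  x0 : ℤ
  x1 : ℤ
  x2 : ℤ
  x3 : ℤ
  x4 : ℤ
  x5 : ℤ
  deriving DecidableEq

namespace Q6

instance : Zero Q6 := ⟨⟨0,0,0,0,0,0⟩⟩
instance : One Q6 := ⟨⟨1,0,0,0,0,0⟩⟩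
instance : Add Q6 := ⟨fun a b => ⟨a.x0+b.x0, a.x1+b.x1, a.x2+b.x2, a.x3+b.x3, a.x4+b.x4, a.x5+b.x5⟩⟩
instance : Neg Q6 := ⟨fun a => ⟨-a.x0, -a.x1, -a.x2, -a.x3, -a.x4, -a.x5⟩⟩
instance : SMul ℤ Q6 := ⟨fun n a => ⟨n*a.x0, n*a.x1, n*a.x2, n*a.x3, n*a.x4, n*a.x5⟩⟩
instance : SMul ℕ Q6 := ⟨fun n a => ⟨n*a.x0, n*a.x1, n*a.x2, n*a.x3, n*a.x4, n*a.x5⟩⟩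
instance : Mul Q6 := ⟨fun a b =>
  ⟨a.x0*b.x0,
   a.x0*b.x1 + a.x1*b.x0,
   a.x0*b.x2 + a.x2*b.x0,
   a.x0*b.x3 + a.x3*b.x0 + a.x1*b.x1 + a.x1*b.x2 + a.x2*b.x1,
   a.x0*b.x4 + a.x4*b.x0 + a.x2*b.x2 + a.x1*b.x2 + a.x2*b.x1,
   a.x0*b.x5 + a.x5*b.x0 + a.x1*b.x4 + a.x4*b.x1 + a.x2*b.x3 + a.x3*b.x2⟩⟩

@[simp] lemma zero_def : (0 : Q6) = ⟨0,0,0,0,0,0⟩ := rfl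
@[simp] lemma one_def : (1 : Q6) = ⟨1,0,0,0,0,0⟩ := rfl
@[simp] lemma add_def (a b : Q6) : a + b = ⟨a.x0+b.x0, a.x1+b.x1, a.x2+b.x2, a.x3+b.x3, a.x4+b.x4, a.x5+b.x5⟩ := rfl
@[simp] lemma neg_def (a : Q6) : -a = ⟨-a.x0, -a.x1, -a.x2, -a.x3, -a.x4, -a.x5⟩ := rfl
@[simp] lemma zsmul_def (n : ℤ) (a : Q6) : n • a = ⟨n*a.x0, n*a.x1, n*a.x2, n*a.x3, n*a.x4, n*a.x5⟩ := rfl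
@[simp] lemma nsmul_def (n : ℕ) (a : Q6) : n • a = ⟨n*a.x0, n*a.x1, n*a.x2, n*a.x3, n*a.x4, n*a.x5⟩ := rfl
@[simp] lemma mul_def (a b : Q6) : a * b =
  ⟨a.x0*b.x0,
   a.x0*b.x1 + a.x1*b.x0,
   a.x0*b.x2 + a.x2*b.x0,
   a.x0*b.x3 + a.x3*b.x0 + a.x1*b.x1 + a.x1*b.x2 + a.x2*b.x1,
   a.x0*b.x4 + a.x4*b.x0 + a.x2*b.x2 + a.x1*b.x2 + a.x2*b.x1,
   a.x0*b.x5 + a.x5*b.x0 + a.x1*b.x4 + a.x4*b.x1 + a.x2*b.x3 + a.x3*b.x2⟩ := rfl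

instance : CommRing Q6 where
  add_assoc a b c := by simp; refine ⟨?_,?_,?_,?_,?_,?_⟩ <;> ring
  zero_add a := by simp
  add_zero a := by simp
  add_comm a b := by simp; refine ⟨?_,?_,?_,?_,?_,?_⟩ <;> ring
  neg_add_cancel a := by simp
  mul_assoc a b c := by simp; refine ⟨?_,?_,?_,?_,?_,?_⟩ <;> ring
  one_mul a := by simp
  mul_one a := by simp
  left_distrib a b c := by simp; refine ⟨?_,?_,?_,?_,?_,?_⟩ <;> ring
  right_distrib a b c := by simp; refine ⟨?_,?_,?_,?_,?_,?_⟩ <;> ring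
  zero_mul a := by simp
  mul_zero a := by simp
  mul_comm a b := by simp; refine ⟨?_,?_,?_,?_,?_,?_⟩ <;> ring
  nsmul := fun n a => n • a
  nsmul_zero a := by simp
  nsmul_succ n a := by simp; refine ⟨?_,?_,?_,?_,?_,?_⟩ <;> ring
  zsmul := fun n a => n • a
  zsmul_zero' a := by simp
  zsmul_succ' n a := by simp; refine ⟨?_,?_,?_,?_,?_,?_⟩ <;> ring
  zsmul_neg' n a := by simp [Int.negSucc_eq]; refine ⟨?_,?_,?_,?_,?_,?_⟩ <;> ring

end Q6

noncomputable section

def Ispan : Ideal (MvPolynomial (Fin 2) ℤ) :=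
  Ideal.span {X 0 * X 1 - (X 0) ^ 2 - (X 1) ^ 2, (X 0) ^ 3, (X 1) ^ 3,
    (X 0) ^ 2 * X 1 - X 0 * (X 1) ^ 2, (X 0) ^ 2 * (X 1) ^ 2}

def ev : MvPolynomial (Fin 2) ℤ →+* Q6 :=
  eval₂Hom (Int.castRingHom Q6) ![⟨0,1,0,0,0,0⟩, ⟨0,0,1,0,0,0⟩]

lemma ev_vanish : ∀ a ∈ Ispan, ev a = 0 := by
  have h : Ispan ≤ RingHom.ker ev := by
    rw [Ispan, Ideal.span_le]
    intro p hp
    simp only [Set.mem_insert_iff, Set.mem_singleton_iff] at hp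
    rcases hp with h | h | h | h | h <;> subst h <;>
      · rw [SetLike.mem_coe, RingHom.mem_ker]
        simp only [ev, map_sub, map_mul, map_pow, coe_eval₂Hom, eval₂_X, pow_succ, pow_zero,
          one_mul]
        simp [Matrix.cons_val_zero, Matrix.cons_val_one]
        try decide
  exact fun a ha => h ha

def fQ : (MvPolynomial (Fin 2) ℤ ⧸ Ispan) →+* Q6 := Ideal.Quotient.lift Ispan ev ev_vanish

@[simp] lemma fQ_mk (p : MvPolynomial (Fin 2) ℤ) :
    fQ (Ideal.Quotient.mk Ispan p) = ev p := Ideal.Quotient.lift_mk _ _ _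

end

noncomputable section
open Ideal.Quotient

lemma hI1 : X 0 * X 1 - (X 0:MvPolynomial (Fin 2) ℤ) ^ 2 - (X 1) ^ 2 ∈ Ispan :=
  Ideal.subset_span (by simp)
lemma hI2 : ((X 0:MvPolynomial (Fin 2) ℤ)) ^ 3 ∈ Ispan := Ideal.subset_span (by simp)
lemma hI3 : ((X 1:MvPolynomial (Fin 2) ℤ)) ^ 3 ∈ Ispan := Ideal.subset_span (by simp)
lemma hI4 : (X 0:MvPolynomial (Fin 2) ℤ) ^ 2 * X 1 - X 0 * (X 1) ^ 2 ∈ Ispan :=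
  Ideal.subset_span (by simp)
lemma hI5 : (X 0:MvPolynomial (Fin 2) ℤ) ^ 2 * (X 1) ^ 2 ∈ Ispan := Ideal.subset_span (by simp)

lemma cons_val_five {α : Type*} (a b c d e f : α) : ![a,b,c,d,e,f] 5 = f := rfl

lemma key : ∃ b : Module.Basis (Fin 6) ℤ (MvPolynomial (Fin 2) ℤ ⧸ Ispan),
    ⇑b = ![1, Ideal.Quotient.mk Ispan (X 0), Ideal.Quotient.mk Ispan (X 1),
      (Ideal.Quotient.mk Ispan (X 0))^2, (Ideal.Quotient.mk Ispan (X 1))^2,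
      (Ideal.Quotient.mk Ispan (X 0))^2 * Ideal.Quotient.mk Ispan (X 1)] := by
  set u : MvPolynomial (Fin 2) ℤ ⧸ Ispan := Ideal.Quotient.mk Ispan (X 0) with hu
  set v : MvPolynomial (Fin 2) ℤ ⧸ Ispan := Ideal.Quotient.mk Ispan (X 1) with hv
  set fam : Fin 6 → MvPolynomial (Fin 2) ℤ ⧸ Ispan := ![1, u, v, u^2, v^2, u^2*v] with hfam
  have p1 : u * v = u^2 + v^2 := by
    rw [hu, hv, ← map_mul, ← map_pow, ← map_pow, ← map_add, Ideal.Quotient.eq, ← sub_sub]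
    exact hI1
  have p2 : u^2 * u = 0 := by
    rw [hu, ← map_pow, ← map_mul, Ideal.Quotient.eq_zero_iff_mem,
      show (X 0:MvPolynomial (Fin 2) ℤ)^2 * X 0 = X 0 ^ 3 by ring]
    exact hI2
  have p3 : v^2 * v = 0 := by
    rw [hv, ← map_pow, ← map_mul, Ideal.Quotient.eq_zero_iff_mem,
      show (X 1:MvPolynomial (Fin 2) ℤ)^2 * X 1 = X 1 ^ 3 by ring]
    exact hI3
  have p4 : v^2 * u = u^2 * v := by
    rw [hu, hv, ← map_pow, ← map_pow, ← map_mul, ← map_mul, Ideal.Quotient.eq,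
      show (X 1:MvPolynomial (Fin 2) ℤ)^2 * X 0 - X 0 ^2 * X 1
        = -(X 0 ^ 2 * X 1 - X 0 * X 1 ^ 2) by ring]
    exact Ispan.neg_mem hI4
  have p5 : (u^2*v) * u = 0 := by
    rw [hu, hv, ← map_pow, ← map_mul, ← map_mul, Ideal.Quotient.eq_zero_iff_mem,
      show (X 0:MvPolynomial (Fin 2) ℤ)^2 * X 1 * X 0 = X 1 * X 0 ^ 3 by ring]
    exact Ideal.mul_mem_left _ _ hI2
  have p6 : (u^2*v) * v = 0 := by
    rw [hu, hv, ← map_pow, ← map_mul, ← map_mul, Ideal.Quotient.eq_zero_iff_mem,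
      show (X 0:MvPolynomial (Fin 2) ℤ)^2 * X 1 * X 1 = X 0 ^ 2 * X 1 ^ 2 by ring]
    exact hI5
  -- linear independence
  have hind : LinearIndependent ℤ fam := by
    rw [Fintype.linearIndependent_iff]
    intro g hg
    have h2 := congrArg fQ hg
    rw [map_sum, map_zero, Fin.sum_univ_six] at h2
    simp only [hfam, hu, hv, Matrix.cons_val_zero, Matrix.cons_val_one, Matrix.head_cons,
      Matrix.cons_val_two, Matrix.tail_cons, Matrix.cons_val_three, Matrix.cons_val_four,
      cons_val_five, map_zsmul, map_one, map_mul, map_pow, fQ_mk] at h2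
    simp only [ev, coe_eval₂Hom, eval₂_X, Matrix.cons_val_zero, Matrix.cons_val_one,
      Matrix.head_cons, pow_two] at h2
    simp only [Q6.mul_def, Q6.one_def, Q6.zsmul_def, Q6.add_def, Q6.zero_def, Q6.mk.injEq,
      mul_zero, mul_one, zero_mul, one_mul, add_zero, zero_add] at h2
    intro i
    fin_cases i
    exacts [h2.1, h2.2.1, h2.2.2.1, h2.2.2.2.1, h2.2.2.2.2.1, h2.2.2.2.2.2]
  -- span
  have hmem : ∀ j : Fin 6, fam j ∈ Submodule.span ℤ (Set.range fam) :=
    fun j => Submodule.subset_span ⟨j, rfl⟩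
  have hstep : ∀ (i : Fin 2) (x : MvPolynomial (Fin 2) ℤ ⧸ Ispan),
      x ∈ Submodule.span ℤ (Set.range fam) →
      x * Ideal.Quotient.mk Ispan (X i) ∈ Submodule.span ℤ (Set.range fam) := by
    intro i x hx
    induction hx using Submodule.span_induction with
    | mem y hy =>
        obtain ⟨j, rfl⟩ := hy
        fin_cases i <;> fin_cases j
        · show (1 : MvPolynomial (Fin 2) ℤ ⧸ Ispan) * u ∈ Submodule.span ℤ (Set.range fam)
          rw [one_mul]; exact hmem 1
        · show u * u ∈ Submodule.span ℤ (Set.range fam)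
          rw [← pow_two]; exact hmem 3
        · show v * u ∈ Submodule.span ℤ (Set.range fam)
          rw [mul_comm, p1]; exact add_mem (hmem 3) (hmem 4)
        · show u^2 * u ∈ Submodule.span ℤ (Set.range fam)
          rw [p2]; exact Submodule.zero_mem _
        · show v^2 * u ∈ Submodule.span ℤ (Set.range fam)
          rw [p4]; exact hmem 5
        · show (u^2*v) * u ∈ Submodule.span ℤ (Set.range fam)
          rw [p5]; exact Submodule.zero_mem _
        · show (1 : MvPolynomial (Fin 2) ℤ ⧸ Ispan) * v ∈ Submodule.span ℤ (Set.range fam)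
          rw [one_mul]; exact hmem 2
        · show u * v ∈ Submodule.span ℤ (Set.range fam)
          rw [p1]; exact add_mem (hmem 3) (hmem 4)
        · show v * v ∈ Submodule.span ℤ (Set.range fam)
          rw [← pow_two]; exact hmem 4
        · show u^2 * v ∈ Submodule.span ℤ (Set.range fam)
          exact hmem 5
        · show v^2 * v ∈ Submodule.span ℤ (Set.range fam)
          rw [p3]; exact Submodule.zero_mem _
        · show (u^2*v) * v ∈ Submodule.span ℤ (Set.range fam)
          rw [p6]; exact Submodule.zero_mem _
    | zero => rw [zero_mul]; exact Submodule.zero_mem _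
    | add a b _ _ ha hb => rw [add_mul]; exact add_mem ha hb
    | smul c a _ ha => rw [smul_mul_assoc]; exact Submodule.smul_mem _ _ ha
  have hspan : ⊤ ≤ Submodule.span ℤ (Set.range fam) := by
    rintro x -
    obtain ⟨p, rfl⟩ := Ideal.Quotient.mk_surjective x
    induction p using MvPolynomial.induction_on with
    | C a =>
        have hca : (C a : MvPolynomial (Fin 2) ℤ) = a • 1 := by
          rw [zsmul_eq_mul, mul_one]
          simp
        rw [hca, map_zsmul, map_one]
        exact Submodule.smul_mem _ _ (hmem 0)
    | add p q hp hq => rw [map_add]; exact add_mem hp hq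
    | mul_X p i hp => rw [map_mul]; exact hstep i _ hp
  exact ⟨Module.Basis.mk hind hspan, Module.Basis.coe_mk _ _⟩

end

/-- The ring `ℤ[u,v]/(uv - u² - v², u³, v³, u²v - uv², u²v²)` is a free
`ℤ`-module of rank 6, with basis the images of `1, u, v, u², v², u²v`. -/
theorem stmt_5 :
    letI I : Ideal (MvPolynomial (Fin 2) ℤ) :=
      Ideal.span {X 0 * X 1 - (X 0) ^ 2 - (X 1) ^ 2, (X 0) ^ 3, (X 1) ^ 3,
        (X 0) ^ 2 * X 1 - X 0 * (X 1) ^ 2, (X 0) ^ 2 * (X 1) ^ 2}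
    letI u := Ideal.Quotient.mk I (X 0)
    letI v := Ideal.Quotient.mk I (X 1)
    ∃ b : Module.Basis (Fin 6) ℤ (MvPolynomial (Fin 2) ℤ ⧸ I),
      ⇑b = ![1, u, v, u ^ 2, v ^ 2, u ^ 2 * v] := by
  exact key
end

section
/- Define A = ℤ[x,y,z]/(xy − x² − y², yz, x²y − xy², x³, y³, z³, y² + z², xy² + xz²) and B = ℤ[a,b,c]/(a², b(b+a), c(c−a+b)). Then the assignment a ↦ y + z, b ↦ −z, c ↦ x + z extends to a well-defined ring isomorphism B → A. -/
/-!
In `ℤ[a,b,c]` the substitution `a ↦ y + z`, `b ↦ -z`, `c ↦ x + z` is a linear change of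
variables with inverse `x ↦ c + b`, `y ↦ a + b`, `z ↦ -b`. It therefore suffices to check that
each substitution carries the defining relations of one ring into the ideal of the other; this is
an explicit combination of the relations in the quotient.
-/

open MvPolynomial

theorem Ideal.map_eq_of_map_symm_le {R S : Type*} [CommRing R] [CommRing S] (e : R ≃+* S)
    {I : Ideal R} {J : Ideal S} (hI : I.map e ≤ J) (hJ : J.map e.symm ≤ I) : I.map e = J :=
  hI.antisymm (Ideal.le_map_of_comap_le_of_surjective _ e.surjective (Ideal.map_symm e ▸ hJ))

theorem Ideal.map_span_le_of_mk_eq_zero {R S F : Type*} [CommRing R] [CommRing S] [FunLike F R S]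
    [RingHomClass F R S] (f : F) {s : Set R} {J : Ideal S}
    (h : ∀ p ∈ s, Ideal.Quotient.mk J (f p) = 0) :
    (Ideal.span s).map f ≤ J := by
  rw [Ideal.map_span, Ideal.span_le]
  rintro _ ⟨p, hp, rfl⟩
  exact Ideal.Quotient.eq_zero_iff_mem.1 (h p hp)

theorem Ideal.Quotient.mk_span_eq_zero {R : Type*} [CommRing R] {s : Set R} {p : R}
    (hp : p ∈ s) : Ideal.Quotient.mk (Ideal.span s) p = 0 :=
  Ideal.Quotient.eq_zero_iff_mem.2 (Ideal.subset_span hp)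

noncomputable abbrev idealA : Ideal (MvPolynomial (Fin 3) ℤ) :=
  Ideal.span {X 0 * X 1 - (X 0) ^ 2 - (X 1) ^ 2, X 1 * X 2,
    (X 0) ^ 2 * X 1 - X 0 * (X 1) ^ 2, (X 0) ^ 3, (X 1) ^ 3, (X 2) ^ 3,
    (X 1) ^ 2 + (X 2) ^ 2, X 0 * (X 1) ^ 2 + X 0 * (X 2) ^ 2}

noncomputable abbrev idealB : Ideal (MvPolynomial (Fin 3) ℤ) :=
  Ideal.span {(X 0) ^ 2, X 1 * (X 1 + X 0), X 2 * (X 2 - X 0 + X 1)}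

noncomputable def substBA : MvPolynomial (Fin 3) ℤ ≃+* MvPolynomial (Fin 3) ℤ :=
  (AlgEquiv.ofAlgHom (aeval ![X 1 + X 2, -X 2, X 0 + X 2]) (aeval ![X 2 + X 1, X 0 + X 1, -X 1])
    (by ext i; fin_cases i <;> simp) (by ext i; fin_cases i <;> simp)).toRingEquiv

theorem substBA_apply (p : MvPolynomial (Fin 3) ℤ) :
    substBA p = aeval ![X 1 + X 2, -X 2, X 0 + X 2] p := rfl

theorem substBA_symm_apply (p : MvPolynomial (Fin 3) ℤ) :
    substBA.symm p = aeval ![X 2 + X 1, X 0 + X 1, -X 1] p := rfl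

theorem map_idealB_le : idealB.map substBA ≤ idealA := by
  refine Ideal.map_span_le_of_mk_eq_zero _ ?_
  simp only [Set.mem_insert_iff, Set.mem_singleton_iff, forall_eq_or_imp, forall_eq,
    substBA_apply, map_add, map_sub, map_mul, map_pow, map_neg, aeval_X, Matrix.cons_val]
  set x := Ideal.Quotient.mk idealA (X 0)
  set y := Ideal.Quotient.mk idealA (X 1)
  set z := Ideal.Quotient.mk idealA (X 2)
  have hxy : x * y - x ^ 2 - y ^ 2 = 0 := by
    simp only [x, y, ← map_pow, ← map_mul, ← map_sub]
    exact Ideal.Quotient.mk_span_eq_zero (by simp)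
  have hyz : y * z = 0 := by
    simp only [y, z, ← map_mul]
    exact Ideal.Quotient.mk_span_eq_zero (by simp)
  have hyz2 : y ^ 2 + z ^ 2 = 0 := by
    simp only [y, z, ← map_pow, ← map_add]
    exact Ideal.Quotient.mk_span_eq_zero (by simp)
  refine ⟨?_, ?_, ?_⟩
  · linear_combination hyz2 + 2 * hyz
  · linear_combination -hyz
  · linear_combination -hxy - hyz2 - hyz

theorem map_idealA_le : idealA.map substBA.symm ≤ idealB := by
  refine Ideal.map_span_le_of_mk_eq_zero _ ?_
  simp only [Set.mem_insert_iff, Set.mem_singleton_iff, forall_eq_or_imp, forall_eq,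
    substBA_symm_apply, map_add, map_sub, map_mul, map_pow, map_neg, aeval_X, Matrix.cons_val]
  set a := Ideal.Quotient.mk idealB (X 0)
  set b := Ideal.Quotient.mk idealB (X 1)
  set c := Ideal.Quotient.mk idealB (X 2)
  have ha : a ^ 2 = 0 := by
    simp only [a, ← map_pow]
    exact Ideal.Quotient.mk_span_eq_zero (by simp)
  have hb : b * (b + a) = 0 := by
    simp only [a, b, ← map_add, ← map_mul]
    exact Ideal.Quotient.mk_span_eq_zero (by simp)
  have hc : c * (c - a + b) = 0 := by
    simp only [a, b, c, ← map_sub, ← map_add, ← map_mul]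
    exact Ideal.Quotient.mk_span_eq_zero (by simp)
  refine ⟨?_, ?_, ?_, ?_, ?_, ?_, ?_, ?_⟩
  · linear_combination -ha - hb - hc
  · linear_combination -hb
  · linear_combination (-a) * hb + (a + b) * hc
  · linear_combination (b + c) * ha + (c + b - a) * hb + (a + 2 * b + c) * hc
  · linear_combination (a + b) * ha + (2 * a + b) * hb
  · linear_combination (-b) * ha + (a - b) * hb
  · linear_combination ha + 2 * hb
  · linear_combination (c + b) * ha + 2 * (c + b) * hb

/-- With `A = ℤ[x,y,z]/(xy - x² - y², yz, x²y - xy², x³, y³, z³, y² + z²,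
xy² + xz²)` and `B = ℤ[a,b,c]/(a², b(b+a), c(c-a+b))`, the assignment
`a ↦ y + z`, `b ↦ -z`, `c ↦ x + z` extends to a ring isomorphism `B ≃ A`. -/
theorem stmt_6 :
    letI IA : Ideal (MvPolynomial (Fin 3) ℤ) :=
      Ideal.span {X 0 * X 1 - (X 0) ^ 2 - (X 1) ^ 2, X 1 * X 2,
        (X 0) ^ 2 * X 1 - X 0 * (X 1) ^ 2, (X 0) ^ 3, (X 1) ^ 3, (X 2) ^ 3,
        (X 1) ^ 2 + (X 2) ^ 2, X 0 * (X 1) ^ 2 + X 0 * (X 2) ^ 2}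
    letI IB : Ideal (MvPolynomial (Fin 3) ℤ) :=
      Ideal.span {(X 0) ^ 2, X 1 * (X 1 + X 0), X 2 * (X 2 - X 0 + X 1)}
    letI x := Ideal.Quotient.mk IA (X 0)
    letI y := Ideal.Quotient.mk IA (X 1)
    letI z := Ideal.Quotient.mk IA (X 2)
    letI a := Ideal.Quotient.mk IB (X 0)
    letI b := Ideal.Quotient.mk IB (X 1)
    letI c := Ideal.Quotient.mk IB (X 2)
    ∃ e : (MvPolynomial (Fin 3) ℤ ⧸ IB) ≃+* (MvPolynomial (Fin 3) ℤ ⧸ IA),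
      e a = y + z ∧ e b = -z ∧ e c = x + z := by
  have hmap : idealA = idealB.map substBA :=
    (Ideal.map_eq_of_map_symm_le substBA map_idealB_le map_idealA_le).symm
  refine ⟨Ideal.quotientEquiv idealB idealA substBA hmap, ?_, ?_, ?_⟩ <;>
    exact (Ideal.quotientEquiv_mk ..).trans (by simp [substBA_apply])
end
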